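/- Sitewise cost bounds for GPA when the hub is not exhausted: for any threshold vector γ_1,…,γ_n with γ_i ∈ [0,1], let ℓ be the allocation produced by the GPA policy, and suppose the remaining hub supply at the end of the horizon is positive (s^end = s − Σ_i L_i > 0). Then for every site i ∈ {1,…,n}: (i) transport_i(ℓ) ≤ γ_i·D_i·(w_i/c_i) + p·(b_i + 2c_i), and (ii) penalty_i(ℓ) ≤ (1 − γ_i)·p·D_i + p·c_i. -/

import Mathlib

/-!
As long as the hub is not exhausted, no site is ever rationed, so at each site GPA is a
threshold refill: an ineligible site gets nothing, an eligible one is topped up to a stock in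
`[b, b + c)` with full trucks only. Full trucks make the transport cost exactly `(w/c) L`, and the
eligibility threshold caps `L` at `γ D + b + c`. Lost sales are demand minus sales, and sales stay
within `c` of `γ D`: a stockout can only hit a site that is not full, and a site that is not full
has already received more than `γ D`.
-/

open Finset

/-- `stock b d ℓ t` is the post-replenishment stock `k^{t+1}` at a single site
(with `stock b d ℓ 0 = k^1 = b`), under demands `d` and allocations `ℓ`. -/
noncomputable def stock (b : ℕ) (d : ℕ → ℕ) (ℓ : ℕ → ℝ) : ℕ → ℝ
  | 0 => (b : ℝ)
  | t + 1 => max (stock b d ℓ t - (d (t + 1) : ℝ)) 0 + ℓ (t + 1)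

/-- Sitewise transport cost `Σ_{t=1}^T w_i ⌈ℓ_i^t / c_i⌉`. -/
noncomputable def transportCost (T : ℕ) (wi : ℝ) (ci : ℕ) (ℓ : ℕ → ℝ) : ℝ :=
  ∑ t ∈ Icc 1 T, wi * (⌈ℓ t / (ci : ℝ)⌉ : ℝ)

/-- Sitewise lost-sales penalty `Σ_{t=1}^T p (d_i^t − k_i^t)_+`. -/
noncomputable def penaltyCost (T : ℕ) (p : ℝ) (b : ℕ) (d : ℕ → ℕ) (ℓ : ℕ → ℝ) : ℝ :=
  ∑ t ∈ Icc 1 T, p * max ((d t : ℝ) - stock b d ℓ (t - 1)) 0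

/-- Total cost of an allocation. -/
noncomputable def totalCost {n : ℕ} (T : ℕ) (w : Fin n → ℝ) (c b : Fin n → ℕ)
    (p : ℝ) (d : Fin n → ℕ → ℕ) (ℓ : Fin n → ℕ → ℝ) : ℝ :=
  ∑ i, (transportCost T (w i) (c i) (ℓ i) + penaltyCost T p (b i) (d i) (ℓ i))

/-- One time step of GPA: eligible sites are processed in index order; site `i` is
eligible if `r i < b i` and `Lprev i ≤ γ i * Dt i`; an eligible site requests
`⌈(b i − r i)/c i⌉` full shipments and receives the min of that and the remaining
hub supply. Returns the remaining supply and the per-site allocation. -/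
noncomputable def gpaInner {n : ℕ} (b c : Fin n → ℕ) (γ : Fin n → ℝ)
    (Dt Lprev r : Fin n → ℕ) (rem : ℕ) : ℕ × (Fin n → ℕ) :=
  (List.finRange n).foldl
    (fun (st : ℕ × (Fin n → ℕ)) (i : Fin n) =>
      if r i < b i ∧ (Lprev i : ℝ) ≤ γ i * (Dt i : ℝ) then
        let q : ℕ := (b i - r i + c i - 1) / c i
        let give : ℕ := min st.1 (c i * q)
        (st.1 - give, Function.update st.2 i give)
      else st)
    (rem, fun _ => 0)

/-- GPA state after `t` time steps: (remaining hub supply, current stocks `k^{t+1}`,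
cumulative allocations `L^t`). Initially `(s, b, 0)`. -/
noncomputable def gpaState {n : ℕ} (b c : Fin n → ℕ) (γ : Fin n → ℝ)
    (d : Fin n → ℕ → ℕ) (s : ℕ) : ℕ → ℕ × (Fin n → ℕ) × (Fin n → ℕ)
  | 0 => (s, b, fun _ => 0)
  | t + 1 =>
    let st := gpaState b c γ d s t
    let r : Fin n → ℕ := fun i => st.2.1 i - d i (t + 1)
    let Dt : Fin n → ℕ := fun i => ∑ u ∈ Icc 1 (t + 1), d i u
    let res := gpaInner b c γ Dt st.2.2 r st.1
    (res.1, fun i => r i + res.2 i, fun i => st.2.2 i + res.2 i)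

/-- Cumulative GPA allocation `L_i^t`. -/
noncomputable def gpaL {n : ℕ} (b c : Fin n → ℕ) (γ : Fin n → ℝ)
    (d : Fin n → ℕ → ℕ) (s : ℕ) (i : Fin n) (t : ℕ) : ℕ :=
  (gpaState b c γ d s t).2.2 i

/-- Per-step GPA allocation `ℓ_i^t` (as a real number). -/
noncomputable def gpaAlloc {n : ℕ} (b c : Fin n → ℕ) (γ : Fin n → ℝ)
    (d : Fin n → ℕ → ℕ) (s : ℕ) (i : Fin n) (t : ℕ) : ℝ :=
  ((gpaL b c γ d s i t - gpaL b c γ d s i (t - 1) : ℕ) : ℝ)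

theorem natCast_tsub_eq_max {R : Type*} [Ring R] [LinearOrder R] [IsStrictOrderedRing R]
    (a b : ℕ) : ((a - b : ℕ) : R) = max ((a : R) - b) 0 := by
  rcases le_total b a with h | h
  · rw [Nat.cast_sub h, max_eq_left (sub_nonneg.mpr (by exact_mod_cast h))]
  · rw [Nat.sub_eq_zero_of_le h, Nat.cast_zero,
      max_eq_right (sub_nonpos.mpr (by exact_mod_cast h))]

section SingleSite

variable {b c : ℕ} {γ : ℝ} {d : ℕ → ℕ} {ℓ : ℕ → ℝ} {T : ℕ}

/-- The stock left once the demand `d (t + 1)` is served: `r^{t+1}` in the paper's indexing,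
as `stock b d ℓ t` is `k^{t+1}`. -/
noncomputable def residualStock (b : ℕ) (d : ℕ → ℕ) (ℓ : ℕ → ℝ) (t : ℕ) : ℝ :=
  max (stock b d ℓ t - d (t + 1)) 0

theorem stock_succ (t : ℕ) : stock b d ℓ (t + 1) = residualStock b d ℓ t + ℓ (t + 1) := rfl

theorem residualStock_nonneg (t : ℕ) : 0 ≤ residualStock b d ℓ t := le_max_right _ _

/-- GPA's eligibility test for the shipment of step `t + 1`. -/
def Eligible (b : ℕ) (γ : ℝ) (d : ℕ → ℕ) (ℓ : ℕ → ℝ) (t : ℕ) : Prop :=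
  residualStock b d ℓ t < b ∧ ∑ u ∈ Icc 1 t, ℓ u ≤ γ * ((∑ u ∈ Icc 1 (t + 1), d u : ℕ) : ℝ)

/-- What GPA does at a single site as long as the hub is not exhausted: nothing is shipped to an
ineligible site, and an eligible one is refilled to a stock between `b` and `b + c`. -/
def IsThresholdRefill (b c : ℕ) (γ : ℝ) (d : ℕ → ℕ) (ℓ : ℕ → ℝ) (T : ℕ) : Prop :=
  ∀ t < T, (Eligible b γ d ℓ t → b ≤ stock b d ℓ (t + 1) ∧ stock b d ℓ (t + 1) ≤ b + c) ∧
    (¬ Eligible b γ d ℓ t → ℓ (t + 1) = 0)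

theorem sum_Icc_one_succ {M : Type*} [AddCommMonoid M] (f : ℕ → M) (t : ℕ) :
    ∑ u ∈ Icc 1 (t + 1), f u = ∑ u ∈ Icc 1 t, f u + f (t + 1) :=
  Finset.sum_Icc_succ_top (by omega) f

theorem cast_sum_Icc_one_succ (t : ℕ) :
    ((∑ u ∈ Icc 1 (t + 1), d u : ℕ) : ℝ) = ((∑ u ∈ Icc 1 t, d u : ℕ) : ℝ) + d (t + 1) := by
  rw [Finset.sum_Icc_succ_top (by omega), Nat.cast_add]

/-- Lost sales are demand minus sales, and cumulative sales are initial stock plus deliveries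
minus final stock. -/
theorem penaltyCost_eq (p : ℝ) (b : ℕ) (d : ℕ → ℕ) (ℓ : ℕ → ℝ) (T : ℕ) :
    penaltyCost T p b d ℓ = p * (((∑ t ∈ Icc 1 T, d t : ℕ) : ℝ)
      - (b + ∑ t ∈ Icc 1 T, ℓ t - stock b d ℓ T)) := by
  rw [penaltyCost, ← Finset.mul_sum]
  congr 1
  induction T with
  | zero => simp [stock]
  | succ T ih =>
    rw [cast_sum_Icc_one_succ, sum_Icc_one_succ, sum_Icc_one_succ ℓ, ih, stock_succ,
      Nat.add_sub_cancel, residualStock]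
    rcases le_total (d (T + 1) : ℝ) (stock b d ℓ T) with h | h
    · rw [max_eq_right (by linarith), max_eq_left (by linarith)]; ring
    · rw [max_eq_left (by linarith), max_eq_right (by linarith)]; ring

theorem transportCost_eq_of_dvd (w : ℝ) (hc : 0 < c)
    (hdvd : ∀ t ∈ Icc 1 T, ∃ m : ℕ, ℓ t = c * m) :
    transportCost T w c ℓ = w / c * ∑ t ∈ Icc 1 T, ℓ t := by
  rw [transportCost, Finset.mul_sum]
  refine Finset.sum_congr rfl fun t ht => ?_
  obtain ⟨m, hm⟩ := hdvd t ht
  have hc' : (c : ℝ) ≠ 0 := by positivity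
  rw [hm, mul_div_cancel_left₀ _ hc', Int.ceil_natCast, Int.cast_natCast]
  field_simp

namespace IsThresholdRefill

theorem le_stock_or_lt_sum (h : IsThresholdRefill b c γ d ℓ T) {t : ℕ} (ht : t ≤ T) :
    (b : ℝ) ≤ stock b d ℓ t ∨ γ * ((∑ u ∈ Icc 1 t, d u : ℕ) : ℝ) < ∑ u ∈ Icc 1 t, ℓ u := by
  cases t with
  | zero => exact Or.inl le_rfl
  | succ t =>
    obtain ⟨hel, hinel⟩ := h t (by omega)
    by_cases he : Eligible b γ d ℓ t
    · exact Or.inl (hel he).1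
    · rw [stock_succ, sum_Icc_one_succ ℓ, hinel he, add_zero, add_zero]
      rw [Eligible, not_and_or, not_lt, not_le] at he
      exact he

theorem sum_le (h : IsThresholdRefill b c γ d ℓ T) {t : ℕ} (hγ : 0 ≤ γ) (ht : t ≤ T) :
    ∑ u ∈ Icc 1 t, ℓ u ≤ γ * ((∑ u ∈ Icc 1 t, d u : ℕ) : ℝ) + b + c := by
  induction t with
  | zero => simpa using (by positivity : (0 : ℝ) ≤ b + c)
  | succ t ih =>
    obtain ⟨hel, hinel⟩ := h t (by omega)
    have ih := ih (by omega)
    rw [cast_sum_Icc_one_succ, sum_Icc_one_succ]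
    by_cases he : Eligible b γ d ℓ t
    · have hstock := (hel he).2
      rw [stock_succ] at hstock
      have hshare := he.2
      rw [cast_sum_Icc_one_succ] at hshare
      linarith [(residualStock_nonneg t : 0 ≤ residualStock b d ℓ t)]
    · rw [hinel he]
      nlinarith [(Nat.cast_nonneg (d (t + 1)) : (0 : ℝ) ≤ _)]

theorem le_sales (h : IsThresholdRefill b c γ d ℓ T) {t : ℕ} (hγ₁ : γ ≤ 1)
    (hd : ∀ t ∈ Icc 1 T, d t ≤ b) (ht : t ≤ T) :
    γ * ((∑ u ∈ Icc 1 t, d u : ℕ) : ℝ) ≤ b + ∑ u ∈ Icc 1 t, ℓ u - stock b d ℓ t + c := by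
  induction t with
  | zero => simp [stock]
  | succ t ih =>
    have ih := ih (by omega)
    have hdb : (d (t + 1) : ℝ) ≤ b := by exact_mod_cast hd (t + 1) (by simp; omega)
    have hγd : γ * d (t + 1) ≤ d (t + 1) := mul_le_of_le_one_left (by positivity) hγ₁
    rw [cast_sum_Icc_one_succ, sum_Icc_one_succ, stock_succ, residualStock]
    rcases le_or_gt (d (t + 1) : ℝ) (stock b d ℓ t) with hs | hs
    · rw [max_eq_left (by linarith)]
      linarith
    · rw [max_eq_right (by linarith)]
      have hfull := h.le_stock_or_lt_sum (t := t) (by omega)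
      have : γ * ((∑ u ∈ Icc 1 t, d u : ℕ) : ℝ) < ∑ u ∈ Icc 1 t, ℓ u :=
        hfull.resolve_left (by linarith)
      nlinarith [(Nat.cast_nonneg c : (0 : ℝ) ≤ _), (Nat.cast_nonneg (d (t + 1)) : (0 : ℝ) ≤ _)]

theorem penaltyCost_le (h : IsThresholdRefill b c γ d ℓ T) {p : ℝ} (hp : 0 ≤ p) (hγ₁ : γ ≤ 1)
    (hd : ∀ t ∈ Icc 1 T, d t ≤ b) :
    penaltyCost T p b d ℓ ≤ (1 - γ) * p * ((∑ t ∈ Icc 1 T, d t : ℕ) : ℝ) + p * c := by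
  have hsales := h.le_sales hγ₁ hd le_rfl
  rw [penaltyCost_eq]
  nlinarith

theorem transportCost_le (h : IsThresholdRefill b c γ d ℓ T) {w p : ℝ} (hc : 0 < c)
    (hdvd : ∀ t ∈ Icc 1 T, ∃ m : ℕ, ℓ t = c * m) (hw : 0 ≤ w) (hwp : w ≤ p * c) (hγ : 0 ≤ γ) :
    transportCost T w c ℓ
      ≤ γ * ((∑ t ∈ Icc 1 T, d t : ℕ) : ℝ) * (w / c) + p * (b + 2 * c) := by
  have hc' : (0 : ℝ) < c := by exact_mod_cast hc
  have hwc₀ : 0 ≤ w / c := by positivity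
  have hwc : w / c ≤ p := (div_le_iff₀ hc').mpr hwp
  rw [transportCost_eq_of_dvd w hc hdvd]
  calc w / c * ∑ t ∈ Icc 1 T, ℓ t
      ≤ w / c * (γ * ((∑ t ∈ Icc 1 T, d t : ℕ) : ℝ) + b + c) :=
        mul_le_mul_of_nonneg_left (h.sum_le hγ le_rfl) hwc₀
    _ ≤ _ := by nlinarith

end IsThresholdRefill

end SingleSite

section GreedyFold

variable {ι : Type*} [DecidableEq ι] (E : ι → Prop) [DecidablePred E] (q : ι → ℕ)

def greedyStep (st : ℕ × (ι → ℕ)) (i : ι) : ℕ × (ι → ℕ) :=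
  if E i then (st.1 - min st.1 (q i), Function.update st.2 i (min st.1 (q i))) else st

theorem foldl_greedyStep_fst_le (l : List ι) (st : ℕ × (ι → ℕ)) :
    (l.foldl (greedyStep E q) st).1 ≤ st.1 := by
  induction l generalizing st with
  | nil => exact le_rfl
  | cons i l ih =>
    refine (ih _).trans ?_
    unfold greedyStep
    split_ifs <;> simp

theorem foldl_greedyStep_conserve [Fintype ι] (l : List ι) (st : ℕ × (ι → ℕ)) (hl : l.Nodup)
    (h0 : ∀ i ∈ l, st.2 i = 0) :
    (l.foldl (greedyStep E q) st).1 + ∑ i, (l.foldl (greedyStep E q) st).2 i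
      = st.1 + ∑ i, st.2 i := by
  induction l generalizing st with
  | nil => rfl
  | cons i l ih =>
    obtain ⟨hi, hl⟩ := List.nodup_cons.mp hl
    rw [List.foldl_cons, ih _ hl]
    · unfold greedyStep
      split_ifs
      · rw [Finset.sum_update_of_mem (mem_univ i), ← Finset.sum_erase_add _ _ (mem_univ i),
          h0 i List.mem_cons_self, add_zero, Finset.sdiff_singleton_eq_erase]
        have := min_le_left st.1 (q i)
        omega
      · rfl
    · intro j hj
      have hji : j ≠ i := fun h => hi (h ▸ hj)
      unfold greedyStep
      split_ifs
      · exact (Function.update_of_ne hji _ _).trans (h0 j (List.mem_cons_of_mem _ hj))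
      · exact h0 j (List.mem_cons_of_mem _ hj)

theorem foldl_greedyStep_snd_of_pos (l : List ι) (st : ℕ × (ι → ℕ))
    (hpos : 0 < (l.foldl (greedyStep E q) st).1) (i : ι) :
    (l.foldl (greedyStep E q) st).2 i = if i ∈ l ∧ E i then q i else st.2 i := by
  induction l generalizing st with
  | nil => simp
  | cons j l ih =>
    rw [List.foldl_cons] at hpos ⊢
    rw [ih _ hpos]
    have hle := (foldl_greedyStep_fst_le E q l _).trans_lt' hpos
    unfold greedyStep at hle ⊢
    by_cases hj : E j
    · simp only [hj, if_true] at hle ⊢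
      have hmin : min st.1 (q j) = q j := min_eq_right (by omega)
      rw [hmin]
      by_cases hij : i = j
      · subst hij; simp [hj]
      · simp [hij]
    · simp only [hj, if_false]
      by_cases hij : i = j
      · subst hij; simp [hj]
      · simp [hij]

end GreedyFold

section GPA

variable {n : ℕ} (b c : Fin n → ℕ) (γ : Fin n → ℝ) (d : Fin n → ℕ → ℕ) (s : ℕ)

theorem gpaInner_eq_foldl (Dt Lprev r : Fin n → ℕ) (rem : ℕ) :
    gpaInner b c γ Dt Lprev r rem = (List.finRange n).foldl
      (greedyStep (fun i => r i < b i ∧ (Lprev i : ℝ) ≤ γ i * (Dt i : ℝ))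
        (fun i => c i * ((b i - r i + c i - 1) / c i))) (rem, fun _ => 0) := rfl

theorem gpaInner_fst_add_sum (Dt Lprev r : Fin n → ℕ) (rem : ℕ) :
    (gpaInner b c γ Dt Lprev r rem).1 + ∑ i, (gpaInner b c γ Dt Lprev r rem).2 i = rem := by
  simpa [gpaInner_eq_foldl] using foldl_greedyStep_conserve _ _ (List.finRange n)
    (rem, fun _ => 0) (List.nodup_finRange n) fun _ _ => rfl

theorem gpaInner_snd_of_pos (Dt Lprev r : Fin n → ℕ) (rem : ℕ)
    (hpos : 0 < (gpaInner b c γ Dt Lprev r rem).1) (i : Fin n) :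
    (gpaInner b c γ Dt Lprev r rem).2 i =
      if r i < b i ∧ (Lprev i : ℝ) ≤ γ i * (Dt i : ℝ) then c i * ((b i - r i + c i - 1) / c i)
      else 0 := by
  rw [gpaInner_eq_foldl] at hpos ⊢
  simp [foldl_greedyStep_snd_of_pos _ _ _ _ hpos]

/-- The outcome `(remaining supply, allocations)` of the GPA step `t + 1`. -/
noncomputable def gpaStep (t : ℕ) : ℕ × (Fin n → ℕ) :=
  gpaInner b c γ (fun j => ∑ u ∈ Icc 1 (t + 1), d j u) (gpaState b c γ d s t).2.2
    (fun j => (gpaState b c γ d s t).2.1 j - d j (t + 1)) (gpaState b c γ d s t).1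

variable {b c γ d s}

theorem gpaState_succ_fst (t : ℕ) : (gpaState b c γ d s (t + 1)).1 = (gpaStep b c γ d s t).1 :=
  rfl

theorem gpaState_succ_stock (t : ℕ) (i : Fin n) :
    (gpaState b c γ d s (t + 1)).2.1 i
      = ((gpaState b c γ d s t).2.1 i - d i (t + 1)) + (gpaStep b c γ d s t).2 i :=
  rfl

theorem gpaL_succ (i : Fin n) (t : ℕ) :
    gpaL b c γ d s i (t + 1) = gpaL b c γ d s i t + (gpaStep b c γ d s t).2 i :=
  rfl

theorem gpaState_fst_add_sum_gpaL (t : ℕ) :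
    (gpaState b c γ d s t).1 + ∑ i, gpaL b c γ d s i t = s := by
  induction t with
  | zero => simp [gpaState, gpaL]
  | succ t ih =>
    rw [gpaState_succ_fst]
    simp only [gpaL_succ, Finset.sum_add_distrib]
    have := gpaInner_fst_add_sum b c γ (fun j => ∑ u ∈ Icc 1 (t + 1), d j u)
      (gpaState b c γ d s t).2.2 (fun j => (gpaState b c γ d s t).2.1 j - d j (t + 1))
      (gpaState b c γ d s t).1
    rw [← gpaStep] at this
    omega

theorem gpaState_fst_antitone : Antitone fun t => (gpaState b c γ d s t).1 :=
  antitone_nat_of_succ_le fun _ => foldl_greedyStep_fst_le _ _ _ _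

theorem gpaState_fst_pos {T t : ℕ} (hend : ∑ i, gpaL b c γ d s i T < s) (ht : t ≤ T) :
    0 < (gpaState b c γ d s t).1 := by
  have hT : 0 < (gpaState b c γ d s T).1 :=
    (lt_add_iff_pos_left _).mp (hend.trans_eq (gpaState_fst_add_sum_gpaL T).symm)
  exact hT.trans_le (gpaState_fst_antitone ht)

theorem gpaAlloc_succ (i : Fin n) (t : ℕ) :
    gpaAlloc b c γ d s i (t + 1) = (gpaStep b c γ d s t).2 i := by
  simp [gpaAlloc, gpaL_succ]

theorem sum_gpaAlloc (i : Fin n) (t : ℕ) :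
    ∑ u ∈ Icc 1 t, gpaAlloc b c γ d s i u = gpaL b c γ d s i t := by
  induction t with
  | zero => simp [gpaL, gpaState]
  | succ t ih => rw [sum_Icc_one_succ, ih, gpaAlloc_succ, gpaL_succ, Nat.cast_add]

theorem stock_gpaAlloc (i : Fin n) (t : ℕ) :
    stock (b i) (d i) (gpaAlloc b c γ d s i) t = (gpaState b c γ d s t).2.1 i := by
  induction t with
  | zero => rfl
  | succ t ih =>
    rw [stock_succ, residualStock, ih, gpaAlloc_succ, gpaState_succ_stock, Nat.cast_add,
      natCast_tsub_eq_max]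

theorem eligible_gpaAlloc_iff (i : Fin n) (t : ℕ) :
    Eligible (b i) (γ i) (d i) (gpaAlloc b c γ d s i) t ↔
      (gpaState b c γ d s t).2.1 i - d i (t + 1) < b i ∧
        (gpaL b c γ d s i t : ℝ) ≤ γ i * ((∑ u ∈ Icc 1 (t + 1), d i u : ℕ) : ℝ) := by
  rw [Eligible, residualStock, stock_gpaAlloc, sum_gpaAlloc, ← natCast_tsub_eq_max, Nat.cast_lt]

theorem gpaStep_snd_of_lt {T t : ℕ} (hend : ∑ i, gpaL b c γ d s i T < s) (ht : t < T)
    (i : Fin n) :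
    (gpaStep b c γ d s t).2 i =
      if (gpaState b c γ d s t).2.1 i - d i (t + 1) < b i ∧
          (gpaL b c γ d s i t : ℝ) ≤ γ i * ((∑ u ∈ Icc 1 (t + 1), d i u : ℕ) : ℝ) then
        c i * ((b i - ((gpaState b c γ d s t).2.1 i - d i (t + 1)) + c i - 1) / c i)
      else 0 :=
  gpaInner_snd_of_pos _ _ _ _ _ _ _ (gpaState_fst_pos hend ht) i

theorem gpaAlloc_dvd {T : ℕ} (hend : ∑ i, gpaL b c γ d s i T < s) (i : Fin n) :
    ∀ t ∈ Icc 1 T, ∃ m : ℕ, gpaAlloc b c γ d s i t = c i * m := by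
  intro t ht
  obtain ⟨t, rfl⟩ : ∃ t', t = t' + 1 := ⟨t - 1, by grind⟩
  rw [gpaAlloc_succ, gpaStep_snd_of_lt hend (by grind)]
  split_ifs
  · exact ⟨_, Nat.cast_mul _ _⟩
  · exact ⟨0, by simp⟩

theorem isThresholdRefill_gpaAlloc {T : ℕ} (hend : ∑ i, gpaL b c γ d s i T < s) (i : Fin n)
    (hc : 0 < c i) :
    IsThresholdRefill (b i) (c i) (γ i) (d i) (gpaAlloc b c γ d s i) T := by
  intro t ht
  rw [stock_gpaAlloc, gpaState_succ_stock, gpaAlloc_succ, gpaStep_snd_of_lt hend ht,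
    eligible_gpaAlloc_iff]
  split_ifs with he
  · refine ⟨fun _ => ?_, fun h => absurd he h⟩
    set x := b i - ((gpaState b c γ d s t).2.1 i - d i (t + 1))
    have hup := Nat.mul_div_le (x + c i - 1) (c i)
    have hlow : x ≤ c i * ((x + c i - 1) / c i) := (ceilDiv_le_iff_le_mul hc).1 le_rfl
    constructor <;> norm_cast <;> omega
  · exact ⟨fun h => absurd h he, fun _ => by simp⟩

end GPA

/-- **Sitewise cost bounds for GPA when the hub is not exhausted.** If
`s^end = s − Σ_i L_i > 0`, then for every site `i`:
`transport_i(ℓ) ≤ γ_i·D_i·(w_i/c_i) + p·(b_i + 2c_i)` and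
`penalty_i(ℓ) ≤ (1 − γ_i)·p·D_i + p·c_i`. -/
theorem gpa_sitewise_bounds_not_exhausted
    (n T : ℕ) (c b : Fin n → ℕ) (hc : ∀ i, 1 ≤ c i)
    (w : Fin n → ℝ) (hw : ∀ i, 0 ≤ w i)
    (p : ℝ) (hp : 0 ≤ p) (hwp : ∀ i, w i ≤ p * c i)
    (s : ℕ) (d : Fin n → ℕ → ℕ) (hd : ∀ i, ∀ t ∈ Icc 1 T, d i t ≤ b i)
    (γ : Fin n → ℝ) (hγ : ∀ i, 0 ≤ γ i ∧ γ i ≤ 1)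
    (ℓ : Fin n → ℕ → ℝ) (hℓ : ℓ = fun i t => gpaAlloc b c γ d s i t)
    (hend : (∑ i, gpaL b c γ d s i T) < s) :
    ∀ i, transportCost T (w i) (c i) (ℓ i)
          ≤ γ i * ((∑ t ∈ Icc 1 T, d i t : ℕ) : ℝ) * (w i / c i) + p * (b i + 2 * c i)
      ∧ penaltyCost T p (b i) (d i) (ℓ i)
          ≤ (1 - γ i) * p * ((∑ t ∈ Icc 1 T, d i t : ℕ) : ℝ) + p * c i := by
  subst hℓ
  intro i
  have hrefill := isThresholdRefill_gpaAlloc hend i (hc i)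
  exact ⟨hrefill.transportCost_le (hc i) (gpaAlloc_dvd hend i) (hw i) (hwp i) (hγ i).1,
    hrefill.penaltyCost_le hp (hγ i).2 (hd i)⟩
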